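/- arXiv:2204.05664 — 6 statements merged into one kernel-verified Lean document; each statement's English description precedes it below -/
import Mathlib

section
/- For all integers n and k with k > 1 and n ≥ k(k+1), the total Roman domination number of the Kneser graph K_{n,k} equals 2(k+1), i.e. γ_tR(K_{n,k}) = 2(k+1). -/
def kneserGraph (n k : ℕ) : SimpleGraph {s : Finset (Fin n) // s.card = k} where
  Adj a b := a ≠ b ∧ Disjoint a.1 b.1
  symm := ⟨fun a b h => ⟨h.1.symm, h.2.symm⟩⟩
  loopless := ⟨fun a h => h.1 rfl⟩

def IsRDF {V : Type*} (G : SimpleGraph V) (f : V → ℕ) : Prop :=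
  (∀ v, f v ≤ 2) ∧ ∀ v, f v = 0 → ∃ u, G.Adj v u ∧ f u = 2

noncomputable def romanDomNum {V : Type*} [Fintype V] (G : SimpleGraph V) : ℕ :=
  sInf {w | ∃ f, IsRDF G f ∧ ∑ v, f v = w}

open Classical in
def IsTRDF {V : Type*} [Fintype V] (G : SimpleGraph V) (f : V → ℕ) : Prop :=
  IsRDF G f ∧ ∀ v, 1 ≤ ∑ u ∈ Finset.univ.filter (fun u => G.Adj v u), f u

noncomputable def totalRomanDomNum {V : Type*} [Fintype V] (G : SimpleGraph V) : ℕ :=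
  sInf {w | ∃ f, IsTRDF G f ∧ ∑ v, f v = w}

open Classical in
def IsSRDF {V : Type*} [Fintype V] (G : SimpleGraph V) (f : V → ℤ) : Prop :=
  (∀ v, f v = -1 ∨ f v = 1 ∨ f v = 2) ∧
  (∀ v, f v = -1 → ∃ u, G.Adj v u ∧ f u = 2) ∧
  (∀ v, 1 ≤ f v + ∑ u ∈ Finset.univ.filter (fun u => G.Adj v u), f u)

noncomputable def signedRomanDomNum {V : Type*} [Fintype V] (G : SimpleGraph V) : ℤ :=
  sInf {w | ∃ f, IsSRDF G f ∧ ∑ v, f v = w}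

def IsDominatingSet {V : Type*} (G : SimpleGraph V) (S : Finset V) : Prop :=
  ∀ v, v ∉ S → ∃ u ∈ S, G.Adj v u

noncomputable def domNum {V : Type*} [Fintype V] (G : SimpleGraph V) : ℕ :=
  sInf {m | ∃ S : Finset V, IsDominatingSet G S ∧ S.card = m}

/-
Upper bound: since `n ≥ k (k + 1)` there are `k + 1` pairwise disjoint `k`-sets, and a `k`-set
meets at most `k` of them, so labelling them `2` is a total Roman dominating function of weight
`2 (k + 1)`.

Lower bound (already for Roman domination): if `t` vertices carry the label `2`, every `k`-set
meeting all of them needs a positive label, so the weight is at least `t` plus the number of such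
`k`-sets. For `t ≤ k` there are at least `2 k + 2 - t` of them: all `k`-sets when `t = 0`; the
`n - k + 1` supersets of a `(k - 1)`-set meeting all labelled sets, when such a set exists;
otherwise the `k` labelled sets are pairwise disjoint, and one point from each of two of them
together with a fixed transversal of the others gives `k ^ 2` such sets.
-/

open Finset

lemma card_le_card_of_pairwiseDisjoint_of_forall_not_disjoint {α : Type*} {𝔅 : Finset (Finset α)}
    {S : Finset α} (h𝔅 : (𝔅 : Set (Finset α)).PairwiseDisjoint id)
    (hS : ∀ B ∈ 𝔅, ¬Disjoint S B) : #𝔅 ≤ #S :=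
  card_le_card_of_forall_subsingleton (fun B x => x ∈ B)
    (fun B hB => by simpa [and_comm] using not_disjoint_iff.mp (hS B hB))
    fun x _ B₁ hB₁ B₂ hB₂ => h𝔅.elim hB₁.1 hB₂.1 (not_disjoint_iff.mpr ⟨x, hB₁.2, hB₂.2⟩)

section FinsetFamilies

variable {α : Type*} [DecidableEq α]

lemma insert_insert_inter_eq_singleton {a b : α} {A T : Finset α} (ha : a ∈ A) (hb : b ∉ A)
    (hTA : Disjoint T A) : insert a (insert b T) ∩ A = {a} := by
  rw [insert_inter_of_mem ha, insert_inter_of_notMem hb, disjoint_iff_inter_eq_empty.mp hTA,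
    insert_empty]

lemma exists_subset_card_le_forall_not_disjoint {U : Finset α} (𝒜 : Finset (Finset α))
    (hU : ∀ A ∈ 𝒜, ¬Disjoint U A) :
    ∃ T ⊆ U, #T ≤ #𝒜 ∧ ∀ A ∈ 𝒜, ¬Disjoint T A := by
  induction 𝒜 using Finset.induction_on with
  | empty => exact ⟨∅, empty_subset U, by simp⟩
  | @insert A 𝒜 hA ih =>
    obtain ⟨T, hTU, hT𝒜, hT⟩ := ih fun B hB => hU B (mem_insert_of_mem hB)
    obtain ⟨x, hxU, hxA⟩ := not_disjoint_iff.mp (hU A (mem_insert_self A 𝒜))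
    refine ⟨insert x T, insert_subset hxU hTU, ?_, ?_⟩
    · rw [card_insert_of_notMem hA]
      exact (card_insert_le x T).trans (by omega)
    · simp only [mem_insert, forall_eq_or_imp]
      exact ⟨not_disjoint_iff.mpr ⟨x, mem_insert_self x T, hxA⟩,
        fun B hB h => hT B hB (h.mono_left (subset_insert x T))⟩

lemma exists_card_lt_forall_not_disjoint {𝒜 : Finset (Finset α)} {A B : Finset α}
    (hA : A ∈ 𝒜) (hB : B ∈ 𝒜) (hAB : A ≠ B) (hmeet : ¬Disjoint A B)
    (h𝒜 : ∀ C ∈ 𝒜, C.Nonempty) :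
    ∃ T, #T < #𝒜 ∧ ∀ C ∈ 𝒜, ¬Disjoint T C := by
  obtain ⟨x, hxA, hxB⟩ := not_disjoint_iff.mp hmeet
  obtain ⟨T, -, hT𝒜, hT⟩ := exists_subset_card_le_forall_not_disjoint (U := 𝒜.biUnion id)
    ((𝒜.erase A).erase B) fun C hC => by
      obtain ⟨y, hy⟩ := h𝒜 C (mem_of_mem_erase (mem_of_mem_erase hC))
      exact not_disjoint_iff.mpr
        ⟨y, mem_biUnion.mpr ⟨C, mem_of_mem_erase (mem_of_mem_erase hC), hy⟩, hy⟩
  have h𝒜card : #((𝒜.erase A).erase B) + 2 = #𝒜 := by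
    rw [card_erase_of_mem (mem_erase.mpr ⟨hAB.symm, hB⟩), card_erase_of_mem hA]
    have := one_lt_card.mpr ⟨A, hA, B, hB, hAB⟩
    omega
  refine ⟨insert x T, (card_insert_le x T).trans_lt (by omega), fun C hC => ?_⟩
  by_cases hCA : C = A
  · exact not_disjoint_iff.mpr ⟨x, mem_insert_self x T, hCA ▸ hxA⟩
  by_cases hCB : C = B
  · exact not_disjoint_iff.mpr ⟨x, mem_insert_self x T, hCB ▸ hxB⟩
  exact fun h => hT C (mem_erase.mpr ⟨hCB, mem_erase.mpr ⟨hCA, hC⟩⟩)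
    (h.mono_left (subset_insert x T))

variable [Fintype α]

lemma exists_pairwiseDisjoint_card_eq {k : ℕ} (hk : 0 < k) (m : ℕ)
    (hm : m * k ≤ Fintype.card α) : ∃ 𝔅 : Finset (Finset α), #𝔅 = m ∧ (∀ B ∈ 𝔅, #B = k) ∧
      (𝔅 : Set (Finset α)).PairwiseDisjoint id := by
  induction m with
  | zero => exact ⟨∅, rfl, by simp, by simp⟩
  | succ m ih =>
    rw [Nat.succ_mul] at hm
    obtain ⟨𝔅, h𝔅m, h𝔅k, h𝔅⟩ := ih (by omega)
    have hU : k ≤ #(𝔅.biUnion id)ᶜ := by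
      have hunion : #(𝔅.biUnion id) ≤ m * k := by
        simpa [sum_congr rfl h𝔅k, h𝔅m] using card_biUnion_le (s := 𝔅) (t := id)
      rw [card_compl]
      omega
    obtain ⟨C, hCU, hC⟩ := exists_subset_card_eq hU
    have hC𝔅 : ∀ B ∈ 𝔅, Disjoint C B := fun B hB =>
      disjoint_of_subset_left hCU (disjoint_compl_left.mono_right (subset_biUnion_of_mem id hB))
    have hCnot : C ∉ 𝔅 := fun h => by
      rw [disjoint_self.mp (hC𝔅 C h), bot_eq_empty, card_empty] at hC
      omega
    refine ⟨insert C 𝔅, by rw [card_insert_of_notMem hCnot, h𝔅m], ?_, ?_⟩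
    · simpa [hC] using h𝔅k
    · rw [coe_insert]
      exact h𝔅.insert fun B hB _ => hC𝔅 B hB

def hittingSets (k : ℕ) (𝒜 : Finset (Finset α)) : Finset (Finset α) :=
  {S ∈ powersetCard k univ | ∀ A ∈ 𝒜, ¬Disjoint S A}

lemma mem_hittingSets {k : ℕ} {𝒜 : Finset (Finset α)} {S : Finset α} :
    S ∈ hittingSets k 𝒜 ↔ #S = k ∧ ∀ A ∈ 𝒜, ¬Disjoint S A := by
  simp [hittingSets]

lemma card_sub_le_card_hittingSets {k : ℕ} {𝒜 : Finset (Finset α)} {B : Finset α}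
    (hB : ∀ A ∈ 𝒜, ¬Disjoint B A) (hBk : #B + 1 = k) :
    Fintype.card α - #B ≤ #(hittingSets k 𝒜) := by
  have hinj : Set.InjOn (insert · B) (Bᶜ : Finset α) := fun x hx y _ hxy =>
    (insert_inj (mem_compl.mp hx)).mp hxy
  calc Fintype.card α - #B = #(Bᶜ.image (insert · B)) := by
        rw [card_image_of_injOn hinj, card_compl]
    _ ≤ #(hittingSets k 𝒜) := card_le_card fun S hS => by
        obtain ⟨x, hx, rfl⟩ := mem_image.mp hS
        refine mem_hittingSets.mpr ⟨?_, fun A hA h => hB A hA (h.mono_left (subset_insert x B))⟩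
        rw [card_insert_of_notMem (mem_compl.mp hx), hBk]

lemma card_mul_card_le_card_hittingSets {k : ℕ} {𝒜 : Finset (Finset α)} {A B T : Finset α}
    (hAB : Disjoint A B) (hTA : Disjoint T A) (hTB : Disjoint T B) (hTk : #T + 2 = k)
    (hT : ∀ C ∈ 𝒜, C ≠ A → C ≠ B → ¬Disjoint T C) :
    #A * #B ≤ #(hittingSets k 𝒜) := by
  set S : α × α → Finset α := fun p => insert p.1 (insert p.2 T)
  have hSA : ∀ p ∈ A ×ˢ B, S p ∩ A = {p.1} := fun p hp =>
    insert_insert_inter_eq_singleton (mem_product.mp hp).1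
      (disjoint_right.mp hAB (mem_product.mp hp).2) hTA
  have hSB : ∀ p ∈ A ×ˢ B, S p ∩ B = {p.2} := fun p hp => by
    rw [show S p = insert p.2 (insert p.1 T) from insert_comm _ _ _]
    exact insert_insert_inter_eq_singleton (mem_product.mp hp).2
      (disjoint_left.mp hAB (mem_product.mp hp).1) hTB
  have hinj : Set.InjOn S (A ×ˢ B : Finset (α × α)) := fun p hp q hq hpq => by
    have h1 := (hSA p hp).symm.trans (hpq ▸ hSA q hq)
    have h2 := (hSB p hp).symm.trans (hpq ▸ hSB q hq)
    exact Prod.ext (singleton_inj.mp h1) (singleton_inj.mp h2)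
  calc #A * #B = #((A ×ˢ B).image S) := by rw [card_image_of_injOn hinj, card_product]
    _ ≤ #(hittingSets k 𝒜) := card_le_card fun s hs => by
        obtain ⟨p, hp, rfl⟩ := mem_image.mp hs
        have hp' := mem_product.mp hp
        have hp2 : p.2 ∉ T := disjoint_right.mp hTB hp'.2
        have hp1 : p.1 ∉ insert p.2 T := by
          rw [mem_insert, not_or]
          exact ⟨fun h => disjoint_left.mp hAB hp'.1 (h ▸ hp'.2), disjoint_right.mp hTA hp'.1⟩
        refine mem_hittingSets.mpr ⟨?_, fun C hC => ?_⟩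
        · rw [card_insert_of_notMem hp1, card_insert_of_notMem hp2, ← hTk]
        by_cases hCA : C = A
        · rw [hCA, not_disjoint_iff_nonempty_inter, hSA p hp]
          exact singleton_nonempty _
        by_cases hCB : C = B
        · rw [hCB, not_disjoint_iff_nonempty_inter, hSB p hp]
          exact singleton_nonempty _
        exact fun h => hT C hC hCA hCB
          (h.mono_left ((subset_insert _ _).trans (subset_insert _ _)))

lemma two_mul_succ_le_card_hittingSets_empty {k : ℕ} (hk : 1 < k)
    (hn : k + 2 ≤ Fintype.card α) :
    2 * (k + 1) ≤ #(hittingSets k (∅ : Finset (Finset α))) := by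
  have hchoose : (k + 2).choose k = (k + 2) * (k + 1) / 2 := by
    rw [Nat.choose_symm_add, Nat.choose_two_right, show k + 2 - 1 = k + 1 by omega]
  calc 2 * (k + 1) ≤ (k + 2) * (k + 1) / 2 := by
        rw [Nat.le_div_iff_mul_le two_pos]
        nlinarith
    _ = (k + 2).choose k := hchoose.symm
    _ ≤ (Fintype.card α).choose k := Nat.choose_le_choose k hn
    _ = #(hittingSets k (∅ : Finset (Finset α))) := by simp [hittingSets]

lemma mul_le_card_hittingSets_of_pairwiseDisjoint {k : ℕ} {𝒜 : Finset (Finset α)} (hk : 1 < k)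
    (hn : 3 * k ≤ Fintype.card α + 2) (h𝒜 : ∀ A ∈ 𝒜, #A = k) (ht : #𝒜 = k)
    (hdisj : (𝒜 : Set (Finset α)).PairwiseDisjoint id) :
    k * k ≤ #(hittingSets k 𝒜) := by
  obtain ⟨A, hA, B, hB, hAB⟩ := one_lt_card.mp (ht ▸ hk)
  have hABd : Disjoint A B := hdisj hA hB hAB
  have h𝒞 : #((𝒜.erase A).erase B) + 2 = k := by
    rw [card_erase_of_mem (mem_erase.mpr ⟨hAB.symm, hB⟩), card_erase_of_mem hA]
    omega
  obtain ⟨T, hTU, hT𝒞, hT⟩ := exists_subset_card_le_forall_not_disjoint (U := (A ∪ B)ᶜ)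
    ((𝒜.erase A).erase B) fun C hC => by
      obtain ⟨hCB, hCA, hC⟩ : C ≠ B ∧ C ≠ A ∧ C ∈ 𝒜 := by simpa using hC
      obtain ⟨x, hx⟩ := card_pos.mp (show 0 < #C by rw [h𝒜 C hC]; omega)
      refine not_disjoint_iff.mpr ⟨x, ?_, hx⟩
      rw [mem_compl, mem_union, not_or]
      exact ⟨disjoint_left.mp (hdisj hC hA hCA) hx, disjoint_left.mp (hdisj hC hB hCB) hx⟩
  have hU : k - 2 ≤ #(A ∪ B)ᶜ := by
    rw [card_compl, card_union_of_disjoint hABd, h𝒜 A hA, h𝒜 B hB]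
    omega
  obtain ⟨T', hTT', hT'U, hT'⟩ := exists_subsuperset_card_eq hTU (by omega) hU
  have hT'AB : Disjoint T' (A ∪ B) := disjoint_of_subset_left hT'U disjoint_compl_left
  have hcard := card_mul_card_le_card_hittingSets (k := k) (𝒜 := 𝒜) hABd
    (disjoint_of_subset_right subset_union_left hT'AB)
    (disjoint_of_subset_right subset_union_right hT'AB) (by omega)
    fun C hC hCA hCB h => hT C (by simp [hC, hCA, hCB]) (h.mono_left hTT')
  rwa [h𝒜 A hA, h𝒜 B hB] at hcard

lemma two_mul_succ_le_card_hittingSets_add_card {k : ℕ} {𝒜 : Finset (Finset α)} (hk : 1 < k)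
    (hn : k * (k + 1) ≤ Fintype.card α) (h𝒜 : ∀ A ∈ 𝒜, #A = k) (ht : #𝒜 ≤ k) :
    2 * (k + 1) ≤ #(hittingSets k 𝒜) + #𝒜 := by
  rcases 𝒜.eq_empty_or_nonempty with rfl | hne
  · simpa using two_mul_succ_le_card_hittingSets_empty hk (by nlinarith)
  by_cases hsmall : ∃ B, #B < k ∧ ∀ A ∈ 𝒜, ¬Disjoint B A
  · obtain ⟨B, hBk, hB⟩ := hsmall
    obtain ⟨B', hBB', hB'⟩ := exists_superset_card_eq (s := B) (n := k - 1) (by omega)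
      ((Nat.sub_le k 1).trans ((Nat.le_mul_of_pos_right k (by omega)).trans hn))
    have hcard := card_sub_le_card_hittingSets (k := k)
      (fun A hA h => hB A hA (h.mono_left hBB')) (by omega)
    have hpos := hne.card_pos
    rw [hB'] at hcard
    have : 2 * k ≤ k * k := Nat.mul_le_mul_right k hk
    rw [Nat.mul_succ] at hn
    omega
  have h𝒜ne : ∀ C ∈ 𝒜, C.Nonempty := fun C hC => card_pos.mp (by rw [h𝒜 C hC]; omega)
  have ht' : #𝒜 = k := by
    obtain ⟨T, -, hT, hTm⟩ := exists_subset_card_le_forall_not_disjoint (U := univ) 𝒜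
      fun C hC => not_disjoint_iff.mpr ((h𝒜ne C hC).imp fun x hx => ⟨mem_univ x, hx⟩)
    by_contra h
    exact hsmall ⟨T, by omega, hTm⟩
  have hdisj : (𝒜 : Set (Finset α)).PairwiseDisjoint id := fun A hA B hB hAB => by
    by_contra h
    obtain ⟨T, hT, hTm⟩ := exists_card_lt_forall_not_disjoint hA hB hAB h h𝒜ne
    exact hsmall ⟨T, by omega, hTm⟩
  have := mul_le_card_hittingSets_of_pairwiseDisjoint hk (by nlinarith) h𝒜 ht' hdisj
  nlinarith

end FinsetFamilies

section RomanDomination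

variable {V : Type*} [Fintype V] {G : SimpleGraph V}

lemma totalRomanDomNum_le_sum {f : V → ℕ} (hf : IsTRDF G f) : totalRomanDomNum G ≤ ∑ v, f v :=
  Nat.sInf_le ⟨f, hf, rfl⟩

lemma le_totalRomanDomNum {m : ℕ} (hG : ∃ f, IsTRDF G f)
    (h : ∀ f, IsTRDF G f → m ≤ ∑ v, f v) : m ≤ totalRomanDomNum G := by
  obtain ⟨f, hf⟩ := hG
  obtain ⟨g, hg, hgG⟩ : totalRomanDomNum G ∈ {w | ∃ f, IsTRDF G f ∧ ∑ v, f v = w} :=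
    Nat.sInf_mem ⟨_, f, hf, rfl⟩
  exact hgG ▸ h g hg

lemma isTRDF_ite_mem [DecidableEq V] {D : Finset V} (hD : ∀ v, ∃ u ∈ D, G.Adj v u) :
    IsTRDF G fun v => if v ∈ D then 2 else 0 := by
  refine ⟨⟨fun v => by dsimp only; split_ifs <;> omega, fun v _ => ?_⟩, fun v => ?_⟩
  · obtain ⟨u, hu, hvu⟩ := hD v
    exact ⟨u, hvu, if_pos hu⟩
  · classical
    obtain ⟨u, hu, hvu⟩ := hD v
    exact le_trans (by simp [hu]) (single_le_sum (fun _ _ => Nat.zero_le _)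
      (mem_filter.mpr ⟨mem_univ u, hvu⟩))

lemma card_pos_add_card_eq_two_le_sum {f : V → ℕ} (hf : ∀ v, f v ≤ 2) :
    #{v | 0 < f v} + #{v | f v = 2} ≤ ∑ v, f v := by
  rw [card_filter, card_filter, ← sum_add_distrib]
  exact sum_le_sum fun v _ => by have := hf v; split_ifs <;> omega

end RomanDomination

section Kneser

variable {n k : ℕ}

lemma exists_isTRDF_kneserGraph_sum_eq (hk : 0 < k) (hn : k * (k + 1) ≤ n) :
    ∃ f, IsTRDF (kneserGraph n k) f ∧ ∑ v, f v = 2 * (k + 1) := by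
  obtain ⟨𝔅, h𝔅card, h𝔅k, h𝔅⟩ := exists_pairwiseDisjoint_card_eq (α := Fin n) hk (k + 1)
    (by rwa [Fintype.card_fin, mul_comm])
  let D : Finset {s : Finset (Fin n) // s.card = k} := 𝔅.subtype fun s => s.card = k
  have hD : #D = k + 1 := by rw [card_subtype, filter_true_of_mem h𝔅k, h𝔅card]
  have hadj : ∀ v, ∃ u ∈ D, (kneserGraph n k).Adj v u := by
    intro v
    obtain ⟨B, hB, hvB⟩ : ∃ B ∈ 𝔅, Disjoint v.1 B := by
      by_contra! h
      have := card_le_card_of_pairwiseDisjoint_of_forall_not_disjoint h𝔅 h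
      rw [h𝔅card, v.2] at this
      omega
    refine ⟨⟨B, h𝔅k B hB⟩, mem_subtype.mpr hB, fun hvu => ?_, hvB⟩
    have hB₀ : B = ∅ := disjoint_self.mp (by simpa [hvu] using hvB)
    simpa [hB₀, hk.ne] using h𝔅k B hB
  exact ⟨_, isTRDF_ite_mem hadj, by simp [sum_ite_mem, hD, mul_comm]⟩

lemma two_mul_succ_le_sum_of_isRDF_kneserGraph (hk : 1 < k) (hn : k * (k + 1) ≤ n)
    {f : {s : Finset (Fin n) // s.card = k} → ℕ} (hf : IsRDF (kneserGraph n k) f) :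
    2 * (k + 1) ≤ ∑ v, f v := by
  have hsum := card_pos_add_card_eq_two_le_sum hf.1
  set P := univ.filter fun v => 0 < f v
  set V₂ := univ.filter fun v => f v = 2
  by_cases ht : k < #V₂
  · have : #V₂ ≤ #P := card_le_card fun v hv => by simp_all [P, V₂]
    omega
  let 𝒜 := V₂.map (Function.Embedding.subtype _)
  have hH : hittingSets k 𝒜 ⊆ P.map (Function.Embedding.subtype _) := by
    intro S hS
    obtain ⟨hSk, hS𝒜⟩ := mem_hittingSets.mp hS
    refine mem_map.mpr ⟨⟨S, hSk⟩, mem_filter.mpr ⟨mem_univ _, Nat.pos_of_ne_zero fun h0 => ?_⟩, rfl⟩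
    obtain ⟨u, hSu, hu⟩ := hf.2 _ h0
    exact hS𝒜 u.1 (mem_map_of_mem _ (mem_filter.mpr ⟨mem_univ u, hu⟩)) hSu.2
  have hcount := two_mul_succ_le_card_hittingSets_add_card hk (by rwa [Fintype.card_fin])
    (𝒜 := 𝒜) (fun A hA => by obtain ⟨v, -, rfl⟩ := mem_map.mp hA; exact v.2)
    (by rw [card_map]; omega)
  have hHP := card_le_card hH
  rw [card_map] at hcount hHP
  omega

end Kneser

theorem kneser_totalRomanDomNum (n k : ℕ) (hk : 1 < k) (hn : k * (k + 1) ≤ n) :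
    totalRomanDomNum (kneserGraph n k) = 2 * (k + 1) := by
  obtain ⟨f, hf, hsum⟩ := exists_isTRDF_kneserGraph_sum_eq (by omega) hn
  exact le_antisymm (hsum ▸ totalRomanDomNum_le_sum hf) <|
    le_totalRomanDomNum ⟨f, hf⟩ fun g hg => two_mul_succ_le_sum_of_isRDF_kneserGraph hk hn hg.1
end

section
/- For every integer n ≥ 12, the signed Roman domination number of the Kneser graph K_{n,2} satisfies γ_sR(K_{n,2}) ≥ 2. -/
open Finset SimpleGraph

/-! Summing the closed-neighbourhood condition of a signed Roman dominating function over all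
vertices of a `d`-regular graph counts every value `d + 1` times, so the weight `w` satisfies
`|V| ≤ (d + 1) w`. For `K_{n,2}` this reads `C(n,2) ≤ (C(n-2,2) + 1) w`, and
`C(n,2) - C(n-2,2) = 2n - 3 > 1` forces `w ≥ 2`. -/

section SignedRoman

variable {V : Type*} [Fintype V] {G : SimpleGraph V}

theorem SimpleGraph.sum_sum_neighborFinset [DecidableRel G.Adj] {α : Type*} [AddCommMonoid α]
    (f : V → α) : ∑ v, ∑ u ∈ G.neighborFinset v, f u = ∑ u, G.degree u • f u := by
  rw [Finset.sum_comm' (t' := univ) (s' := fun u => G.neighborFinset u)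
    (fun v u => by simp [mem_neighborFinset, G.adj_comm])]
  simp [card_neighborFinset_eq_degree]

theorem isSRDF_one (G : SimpleGraph V) : IsSRDF G 1 := by
  refine ⟨fun _ => by simp, fun _ h => by simp at h, fun v => ?_⟩
  simp only [Pi.one_apply, le_add_iff_nonneg_right]
  positivity

theorem le_signedRomanDomNum {m : ℤ} (h : ∀ f, IsSRDF G f → m ≤ ∑ v, f v) :
    m ≤ signedRomanDomNum G :=
  le_csInf ⟨_, 1, isSRDF_one G, rfl⟩ fun _ ⟨f, hf, hw⟩ => hw ▸ h f hf

theorem IsSRDF.card_le_mul_sum [DecidableRel G.Adj] {d : ℕ} (hG : G.IsRegularOfDegree d)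
    {f : V → ℤ} (hf : IsSRDF G f) : (Fintype.card V : ℤ) ≤ (d + 1) * ∑ v, f v := by
  have hclosed (v : V) : 1 ≤ f v + ∑ u ∈ G.neighborFinset v, f u := by
    convert hf.2.2 v using 3
    rw [neighborFinset_eq_filter]
    congr
  calc (Fintype.card V : ℤ) = ∑ _v : V, 1 := by simp
    _ ≤ ∑ v, (f v + ∑ u ∈ G.neighborFinset v, f u) := sum_le_sum fun v _ => hclosed v
    _ = (d + 1) * ∑ v, f v := by
      simp [sum_add_distrib, G.sum_sum_neighborFinset, hG.degree_eq, mul_sum, add_mul, add_comm]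

end SignedRoman

section Kneser

variable {n k : ℕ}

instance : DecidableRel (kneserGraph n k).Adj := fun a b =>
  inferInstanceAs (Decidable (a ≠ b ∧ Disjoint a.1 b.1))

theorem kneserGraph_adj_iff (hk : 0 < k) {a b : {s : Finset (Fin n) // s.card = k}} :
    (kneserGraph n k).Adj a b ↔ Disjoint a.1 b.1 := by
  refine ⟨And.right, fun h => ⟨?_, h⟩⟩
  rintro rfl
  rw [disjoint_self_iff_empty, ← card_eq_zero, a.2] at h
  omega

theorem kneserGraph_isRegularOfDegree (hk : 0 < k) :
    (kneserGraph n k).IsRegularOfDegree ((n - k).choose k) := by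
  intro a
  have hcard : #(a.1ᶜ.powersetCard k) = (n - k).choose k := by
    rw [card_powersetCard, card_compl, a.2, Fintype.card_fin]
  rw [← card_neighborFinset_eq_degree, ← hcard]
  refine card_nbij' Subtype.val (fun s => if h : s.card = k then ⟨s, h⟩ else a) ?_ ?_ ?_ ?_
  · intro b hb
    simpa [mem_powersetCard, subset_compl_iff_disjoint_left, b.2,
      kneserGraph_adj_iff hk] using hb
  · intro s hs
    simp_all [mem_powersetCard, subset_compl_iff_disjoint_left, kneserGraph_adj_iff hk]
  · intro b _
    simp [b.2]
  · intro s hs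
    simp_all [mem_powersetCard]

end Kneser

theorem Nat.choose_two_sub_two_add_one_lt {n : ℕ} (hn : 3 ≤ n) :
    (n - 2).choose 2 + 1 < n.choose 2 := by
  obtain ⟨m, rfl⟩ : ∃ m, n = m + 3 := ⟨n - 3, by omega⟩
  have h₁ : (m + 3).choose 2 = (m + 2) + (m + 2).choose 2 := by
    simpa using Nat.choose_succ_succ' (m + 2) 1
  have h₂ : (m + 2).choose 2 = (m + 1) + (m + 1).choose 2 := by
    simpa using Nat.choose_succ_succ' (m + 1) 1
  simp only [show m + 3 - 2 = m + 1 by omega]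
  omega

theorem kneser2_signedRomanDomNum_lower (n : ℕ) (hn : 12 ≤ n) :
    2 ≤ signedRomanDomNum (kneserGraph n 2) := by
  refine le_signedRomanDomNum fun f hf => ?_
  have hcard := hf.card_le_mul_sum (kneserGraph_isRegularOfDegree two_pos)
  rw [Fintype.card_finset_len, Fintype.card_fin] at hcard
  have hlt : ((n - 2).choose 2 + 1 : ℤ) < n.choose 2 := by
    exact_mod_cast Nat.choose_two_sub_two_add_one_lt (by omega)
  by_contra! hw
  nlinarith
end

section
/- For every even integer n with n ≥ 12, the signed Roman domination number of the Kneser graph K_{n,2} satisfies γ_sR(K_{n,2}) ≤ 5. -/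
/-!
Identify the ground set with `ℤ/n`, `n = 2m`, and label the pair `{x, y}` by `g (x + y)`, plus `1`
on a set `E` of exceptional pairs. Writing `f` for this labelling, `S x` for the total label of the
pairs through `x` and `W` for the total weight, the closed neighbourhood of `{a, b}` in `K(n,2)`
weighs `W + 2 f {a, b} - S a - S b`, so labels in `{-1, 1, 2}`, `S ≤ 1` and `W = 5` give a signed
Roman dominating function of weight `5`. For a sum labelling, `S x = ∑ g - g (2x) + deg_E x`; when
`∑ g = 0` this gives `2W = 2|E| - ∑ₓ g (2x)`, so only the sums of `g` over the odd and over the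
even residues matter. The pairs summing to `1` get label `2`, and as `n` is even every vertex is
disjoint from one of them.

For `m` odd, `E = ∅` and the odd and even residues carry the sums `5` and `-5`. For `m = 2p` they
carry `2` and `-2`, and `E` is the path `2p+1 — 1 — p+1 — 3p+1`: each of its points `x` has
`g (2x) = 1` and lies on at most two of its pairs.
-/

open Finset

theorem signedRomanDomNum_le_sum {V : Type*} [Fintype V] {G : SimpleGraph V} {f : V → ℤ}
    (hf : IsSRDF G f) : signedRomanDomNum G ≤ ∑ v, f v := by
  refine csInf_le ⟨-(Fintype.card V : ℤ), ?_⟩ ⟨f, hf, rfl⟩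
  rintro _ ⟨g, hg, rfl⟩
  calc -(Fintype.card V : ℤ) = ∑ _v : V, (-1 : ℤ) := by simp
    _ ≤ ∑ v, g v := sum_le_sum fun v _ => by rcases hg.1 v with h | h | h <;> omega

theorem kneserGraph_adj_iff_disjoint {n k : ℕ} (hk : 0 < k)
    {u v : {s : Finset (Fin n) // s.card = k}} :
    (kneserGraph n k).Adj u v ↔ Disjoint u.1 v.1 := by
  refine ⟨And.right, fun h => ⟨?_, h⟩⟩
  rintro rfl
  have := u.2
  rw [(disjoint_self_iff_empty _).1 h, card_empty] at this
  omega

theorem Finset.pair_eq_pair_iff {α : Type*} [DecidableEq α] {x y z w : α} :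
    ({x, y} : Finset α) = {z, w} ↔ x = z ∧ y = w ∨ x = w ∧ y = z := by
  rw [← coe_inj, coe_pair, coe_pair, Set.pair_eq_pair_iff]

theorem Finset.sum_range_two_mul {M : Type*} [AddCommMonoid M] (h : ℕ → M) (m : ℕ) :
    ∑ k ∈ range (2 * m), h k = ∑ i ∈ range m, (h (2 * i) + h (2 * i + 1)) := by
  induction m with
  | zero => simp
  | succ m ih =>
    rw [mul_add, mul_one, sum_range_succ, sum_range_succ, sum_range_succ, ih, add_assoc]

namespace KneserTwo

def signOn (S : Finset ℕ) (i : ℕ) : ℤ := if i ∈ S then 1 else -1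

theorem signOn_eq_or (S : Finset ℕ) (i : ℕ) :
    signOn S i = -1 ∨ signOn S i = 1 ∨ signOn S i = 2 := by
  unfold signOn
  split_ifs <;> simp

theorem sum_range_signOn {S : Finset ℕ} {m : ℕ} (hS : S ⊆ range m) :
    ∑ i ∈ range m, signOn S i = 2 * #S - m := by
  have h : ∀ i, signOn S i = 2 * (if i ∈ S then 1 else 0) - 1 := fun i => by
    unfold signOn
    split_ifs <;> norm_num
  simp only [h, sum_sub_distrib, ← mul_sum, sum_boole, filter_mem_eq_inter, inter_eq_right.2 hS]
  simp

def oddLabel (t i : ℕ) : ℤ := if i < 2 then 2 else signOn (range t) i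

theorem oddLabel_eq_or (t i : ℕ) : oddLabel t i = -1 ∨ oddLabel t i = 1 ∨ oddLabel t i = 2 := by
  unfold oddLabel
  split_ifs
  exacts [by simp, signOn_eq_or _ _]

theorem sum_range_oddLabel {t m : ℕ} (ht2 : 2 ≤ t) (htm : t ≤ m) :
    ∑ i ∈ range m, oddLabel t i = 2 * t + 2 - m := by
  have h : ∀ i, oddLabel t i = signOn (range t) i + if i ∈ range 2 then 1 else 0 := fun i => by
    unfold oddLabel signOn
    split_ifs <;> simp_all <;> omega
  simp only [h, sum_add_distrib, sum_range_signOn (range_subset_range.2 htm), sum_boole,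
    filter_mem_eq_inter, inter_eq_right.2 (range_subset_range.2 (ht2.trans htm)), card_range]
  push_cast
  ring

abbrev Vertex (n : ℕ) := {s : Finset (Fin n) // s.card = 2}

variable {n : ℕ}

def incidenceSum (f : Vertex n → ℤ) (x : Fin n) : ℤ := ∑ v with x ∈ v.1, f v

theorem sum_incidenceSum (f : Vertex n → ℤ) : ∑ x, incidenceSum f x = 2 * ∑ v, f v := by
  simp only [incidenceSum, sum_filter]
  rw [sum_comm, mul_sum]
  refine sum_congr rfl fun v _ => ?_
  rw [sum_ite_mem, univ_inter, sum_const, v.2, two_nsmul, two_mul]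

theorem sum_disjoint_eq (f : Vertex n → ℤ) {v : Vertex n} {a b : Fin n} (hab : a ≠ b)
    (hv : v.1 = {a, b}) :
    ∑ u with Disjoint v.1 u.1, f u = ∑ u, f u + f v - incidenceSum f a - incidenceSum f b := by
  have hboth : ({u | a ∈ u.1 ∧ b ∈ u.1} : Finset (Vertex n)) = {v} := by
    ext u
    simp only [mem_filter, mem_univ, true_and, mem_singleton]
    refine ⟨fun ⟨ha, hb⟩ => Subtype.ext ?_, by rintro rfl; simp [hv]⟩
    rw [hv]
    exact (eq_of_subset_of_card_le (insert_subset ha (singleton_subset_iff.2 hb))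
      (by rw [u.2, card_pair hab])).symm
  have hunion := sum_union_inter (s₁ := {u | a ∈ u.1}) (s₂ := {u | b ∈ u.1}) (f := f)
  rw [← filter_or, ← filter_and, hboth, sum_singleton] at hunion
  have hsplit := sum_filter_add_sum_filter_not univ (fun u : Vertex n => a ∈ u.1 ∨ b ∈ u.1) f
  have hdisj : ({u | Disjoint v.1 u.1} : Finset (Vertex n)) =
      ({u | ¬(a ∈ u.1 ∨ b ∈ u.1)} : Finset (Vertex n)) := by
    ext u
    simp [hv]
  rw [hdisj, incidenceSum, incidenceSum]
  linarith

theorem signedRomanDomNum_le_of_incidenceSum_le_one (f : Vertex n → ℤ)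
    (hval : ∀ v, f v = -1 ∨ f v = 1 ∨ f v = 2)
    (hdom : ∀ v : Vertex n, ∃ u : Vertex n, Disjoint v.1 u.1 ∧ f u = 2)
    (hS : ∀ x, incidenceSum f x ≤ 1) (hW : 5 ≤ ∑ v, f v) :
    signedRomanDomNum (kneserGraph n 2) ≤ ∑ v, f v := by
  classical
  refine signedRomanDomNum_le_sum ⟨hval, fun v _ => ?_, fun v => ?_⟩
  · obtain ⟨u, hu, h2⟩ := hdom v
    exact ⟨u, (kneserGraph_adj_iff_disjoint two_pos).2 hu, h2⟩
  · obtain ⟨a, b, hab, hv⟩ := card_eq_two.1 v.2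
    simp_rw [kneserGraph_adj_iff_disjoint two_pos]
    rw [sum_disjoint_eq f hab hv]
    have := hS a
    have := hS b
    rcases hval v with h | h | h <;> omega

theorem card_filter_mem_lt {E : Finset (Vertex n)} {s t : Vertex n} (hs : s ∈ E) (ht : t ∈ E)
    (hst : Disjoint s.1 t.1) (x : Fin n) : #{v ∈ E | x ∈ v.1} < #E := by
  refine card_lt_card (filter_ssubset.2 ?_)
  by_cases hx : x ∈ s.1
  exacts [⟨t, ht, disjoint_left.1 hst hx⟩, ⟨s, hs, hx⟩]

def parityLabel (o e : ℕ → ℤ) (z : Fin n) : ℤ :=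
  if z.val % 2 = 1 then o (z.val / 2) else e (z.val / 2)

theorem parityLabel_of_val {o e : ℕ → ℤ} {z : Fin n} {k : ℕ} (hz : z.val = k) :
    parityLabel o e z = if k % 2 = 1 then o (k / 2) else e (k / 2) := by
  rw [parityLabel, hz]

theorem parityLabel_of_forall {o e : ℕ → ℤ} {P : ℤ → Prop} (ho : ∀ i, P (o i))
    (he : ∀ i, P (e i)) (z : Fin n) : P (parityLabel o e z) := by
  unfold parityLabel
  split_ifs
  exacts [ho _, he _]

theorem sum_parityLabel {m : ℕ} (hn : n = 2 * m) (o e : ℕ → ℤ) :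
    ∑ z : Fin n, parityLabel o e z = ∑ i ∈ range m, o i + ∑ i ∈ range m, e i := by
  subst hn
  unfold parityLabel
  rw [Fin.sum_univ_eq_sum_range (fun k => if k % 2 = 1 then o (k / 2) else e (k / 2)),
    sum_range_two_mul, add_comm, ← sum_add_distrib]
  refine sum_congr rfl fun i _ => ?_
  rw [if_neg (by omega), if_pos (by omega), show 2 * i / 2 = i by omega,
    show (2 * i + 1) / 2 = i by omega, add_comm]

section NeZero

variable [NeZero n]

theorem eq_pair_sum_sub {s : Finset (Fin n)} (hs : s.card = 2) {x : Fin n} (hx : x ∈ s) :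
    s = {x, (∑ z ∈ s, z) - x} ∧ (∑ z ∈ s, z) - x ≠ x := by
  obtain ⟨a, b, hab, rfl⟩ := card_eq_two.1 hs
  rw [sum_pair hab]
  rcases mem_insert.1 hx with rfl | hx
  · simpa using hab.symm
  · rw [mem_singleton.1 hx]
    simpa [pair_comm] using hab

theorem incidenceSum_comp_sum (g : Fin n → ℤ) (x : Fin n) :
    incidenceSum (fun v => g (∑ z ∈ v.1, z)) x = ∑ z, g z - g (x + x) := by
  rw [incidenceSum, ← Equiv.sum_comp (Equiv.addLeft x) g]
  simp only [Equiv.coe_addLeft]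
  rw [← sum_erase_eq_sub (mem_univ x)]
  refine sum_bij (fun v _ => (∑ z ∈ v.1, z) - x) (fun v hv => ?_) (fun v hv w hw h => ?_)
    (fun y hy => ?_) (fun v _ => by simp)
  · exact mem_erase.2 ⟨(eq_pair_sum_sub v.2 (mem_filter.1 hv).2).2, mem_univ _⟩
  · rw [mem_filter] at hv hw
    exact Subtype.ext ((eq_pair_sum_sub v.2 hv.2).1.trans (h ▸ (eq_pair_sum_sub w.2 hw.2).1.symm))
  · have hyx := ne_of_mem_erase hy
    exact ⟨⟨{x, y}, card_pair hyx.symm⟩, by simp, by simp [sum_pair hyx.symm]⟩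

theorem add_self_ne_one (hn : Even n) (h1 : 1 < n) (x : Fin n) : x + x ≠ 1 := by
  intro h
  have hval := congrArg Fin.val h
  rw [Fin.val_add, Fin.val_one', Nat.mod_eq_of_lt h1] at hval
  exact Nat.not_even_one (hval ▸ (Even.add_self x.val).mod_even hn)

theorem exists_disjoint_sum_eq_one (hn : Even n) (h5 : 5 ≤ n) (v : Vertex n) :
    ∃ u : Vertex n, Disjoint v.1 u.1 ∧ ∑ z ∈ u.1, z = 1 := by
  obtain ⟨a, b, -, hv⟩ := card_eq_two.1 v.2
  obtain ⟨s, -, hs⟩ := exists_mem_notMem_of_card_lt_card (s := {a, b, 1 - a, 1 - b}) (t := univ)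
    (card_le_four.trans_lt (by rw [card_univ, Fintype.card_fin]; omega))
  simp only [mem_insert, mem_singleton, not_or] at hs
  have hne : s ≠ 1 - s := fun h => add_self_ne_one hn (by omega) s (by nth_rw 2 [h]; abel)
  refine ⟨⟨{s, 1 - s}, card_pair hne⟩, ?_, by simp [sum_pair hne]⟩
  rw [hv]
  simp only [disjoint_insert_left, disjoint_singleton_left, mem_insert, mem_singleton, not_or]
  refine ⟨⟨?_, ?_⟩, ?_, ?_⟩ <;> rintro rfl <;> simp at hs

def sumLabel (g : Fin n → ℤ) (E : Finset (Vertex n)) (v : Vertex n) : ℤ :=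
  g (∑ z ∈ v.1, z) + if v ∈ E then 1 else 0

theorem incidenceSum_sumLabel (g : Fin n → ℤ) (E : Finset (Vertex n)) (x : Fin n) :
    incidenceSum (sumLabel g E) x = ∑ z, g z - g (x + x) + #{v ∈ E | x ∈ v.1} := by
  rw [← incidenceSum_comp_sum]
  simp only [incidenceSum, sumLabel, sum_add_distrib, sum_boole, filter_filter]
  congr 3
  ext v
  simp [and_comm]

theorem signedRomanDomNum_le_five_of_sumLabel (hn : Even n) (h5 : 5 ≤ n) (g : Fin n → ℤ)
    (E : Finset (Vertex n)) (hg : ∀ z, g z = -1 ∨ g z = 1 ∨ g z = 2)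
    (hgE : ∀ v ∈ E, g (∑ z ∈ v.1, z) = 1) (hg1 : g 1 = 2) (hG : ∑ z, g z = 0)
    (hdeg : ∀ x, (#{v ∈ E | x ∈ v.1} : ℤ) ≤ 1 + g (x + x))
    (hW : 2 * #E - ∑ x, g (x + x) = 10) : signedRomanDomNum (kneserGraph n 2) ≤ 5 := by
  have hweight : ∑ v, sumLabel g E v = 5 := by
    have h := sum_incidenceSum (fun v => g (∑ z ∈ v.1, z))
    simp only [incidenceSum_comp_sum, hG, zero_sub, sum_neg_distrib] at h
    have : ∑ v, sumLabel g E v = ∑ v : Vertex n, g (∑ z ∈ v.1, z) + #E := by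
      simp [sumLabel, sum_add_distrib]
    linarith
  rw [← hweight]
  refine signedRomanDomNum_le_of_incidenceSum_le_one _ (fun v => ?_) (fun v => ?_)
    (fun x => ?_) hweight.ge
  · by_cases hv : v ∈ E
    · simp [sumLabel, hv, hgE v hv]
    · simpa [sumLabel, hv] using hg _
  · obtain ⟨u, hu, hu1⟩ := exists_disjoint_sum_eq_one hn h5 v
    have huE : u ∉ E := fun h => by simpa [hu1, hg1] using hgE u h
    exact ⟨u, hu, by simp [sumLabel, hu1, hg1, huE]⟩
  · rw [incidenceSum_sumLabel, hG]
    linarith [hdeg x]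

theorem parityLabel_add_self {m : ℕ} (hn : n = 2 * m) (o e : ℕ → ℤ) (x : Fin n) :
    parityLabel o e (x + x) = e (x.val % m) := by
  subst hn
  simp [parityLabel, Fin.val_add, ← two_mul, Nat.mul_mod_mul_left]

theorem sum_parityLabel_add_self {m : ℕ} (hn : n = 2 * m) (o e : ℕ → ℤ) :
    ∑ x : Fin n, parityLabel o e (x + x) = 2 * ∑ i ∈ range m, e i := by
  simp only [parityLabel_add_self hn]
  subst hn
  rw [Fin.sum_univ_eq_sum_range (fun k => e (k % m)), two_mul, sum_range_add, two_mul]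
  congr 1 <;> refine sum_congr rfl fun i hi => ?_ <;> simp [Nat.mod_eq_of_lt (mem_range.1 hi)]

theorem parityLabel_one (h : 1 < n) (o e : ℕ → ℤ) : parityLabel o e (1 : Fin n) = o 0 := by
  simp [parityLabel, Nat.mod_eq_of_lt h]

theorem signedRomanDomNum_le_five_of_eq_four_mul_add_two {q : ℕ} (hn : n = 4 * q + 2)
    (hq : 3 ≤ q) : signedRomanDomNum (kneserGraph n 2) ≤ 5 := by
  have hm : n = 2 * (2 * q + 1) := by omega
  have hS : range (q - 2) ⊆ range (2 * q + 1) := range_subset_range.2 (by omega)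
  have hval := parityLabel_of_forall (n := n) (P := fun a => a = -1 ∨ a = 1 ∨ a = 2)
    (oddLabel_eq_or (q + 2)) (signOn_eq_or (range (q - 2)))
  refine signedRomanDomNum_le_five_of_sumLabel ⟨2 * q + 1, by omega⟩ (by omega) _ ∅ hval (by simp)
    (by simp [parityLabel_one (n := n) (by omega), oddLabel]) ?_ (fun x => ?_) ?_
  · rw [sum_parityLabel hm, sum_range_oddLabel (by omega) (by omega), sum_range_signOn hS,
      card_range]
    omega
  · rw [filter_empty, card_empty, Nat.cast_zero]
    have := hval (x + x)
    omega
  · rw [sum_parityLabel_add_self hm, sum_range_signOn hS, card_empty, card_range]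
    omega

theorem ofNat_inj {a b : ℕ} (ha : a < n) (hb : b < n) :
    Fin.ofNat n a = Fin.ofNat n b ↔ a = b := by
  simp [Fin.ext_iff, Nat.mod_eq_of_lt ha, Nat.mod_eq_of_lt hb]

theorem card_pair_ofNat {a b : ℕ} (ha : a < n) (hb : b < n) (hab : a ≠ b) :
    #{Fin.ofNat n a, Fin.ofNat n b} = 2 :=
  card_pair (mt (ofNat_inj ha hb).1 hab)

theorem val_ofNat_add_ofNat (a b : ℕ) : (Fin.ofNat n a + Fin.ofNat n b).val = (a + b) % n := by
  simp [Fin.val_add, Nat.add_mod]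

def pathPairs (p : ℕ) : Finset (Vertex n) :=
  ({{Fin.ofNat n 1, Fin.ofNat n (2 * p + 1)}, {Fin.ofNat n (p + 1), Fin.ofNat n (3 * p + 1)},
    {Fin.ofNat n 1, Fin.ofNat n (p + 1)}} : Finset (Finset (Fin n))).subtype (·.card = 2)

def fourMulLabel (p : ℕ) : Fin n → ℤ := parityLabel (oddLabel p) (signOn ({1, p + 1} ∪ Ico 3 p))

variable {p : ℕ}

theorem val_eq_of_mem_pathPairs (hn : n = 4 * p) (hp : 3 ≤ p) {v : Vertex n}
    (hv : v ∈ pathPairs p) {x : Fin n} (hx : x ∈ v.1) :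
    x.val = 1 ∨ x.val = p + 1 ∨ x.val = 2 * p + 1 ∨ x.val = 3 * p + 1 := by
  subst hn
  simp only [pathPairs, mem_subtype, mem_insert, mem_singleton] at hv
  rcases hv with h | h | h <;> rw [h] at hx <;> simp only [mem_insert, mem_singleton] at hx <;>
    rcases hx with rfl | rfl <;> simp (disch := omega) [Nat.mod_eq_of_lt]

theorem card_pathPairs (hn : n = 4 * p) (hp : 3 ≤ p) : #(pathPairs p : Finset (Vertex n)) = 3 := by
  rw [pathPairs, card_subtype, filter_true_of_mem, card_insert_of_notMem, card_pair] <;>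
    simp (disch := omega) only [ne_eq, mem_insert, mem_singleton, not_or, Finset.pair_eq_pair_iff,
      ofNat_inj, forall_eq_or_imp, forall_eq, card_pair_ofNat, true_and, and_true] <;> omega

theorem exists_disjoint_mem_pathPairs (hn : n = 4 * p) (hp : 3 ≤ p) :
    ∃ s ∈ pathPairs p, ∃ t ∈ pathPairs p, Disjoint (s : Vertex n).1 t.1 := by
  have h1 := card_pair_ofNat (n := n) (a := 1) (b := 2 * p + 1) (by omega) (by omega) (by omega)
  have h2 := card_pair_ofNat (n := n) (a := p + 1) (b := 3 * p + 1) (by omega) (by omega) (by omega)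
  refine ⟨⟨_, h1⟩, mem_subtype.2 (by simp), ⟨_, h2⟩, mem_subtype.2 (by simp), ?_⟩
  simp (disch := omega) only [disjoint_insert_left, disjoint_singleton_left, mem_insert,
    mem_singleton, ofNat_inj]
  omega

theorem fourMulLabel_add_self (hn : n = 4 * p) (hp : 3 ≤ p) {x : Fin n}
    (hx : x.val = 1 ∨ x.val = p + 1 ∨ x.val = 2 * p + 1 ∨ x.val = 3 * p + 1) :
    fourMulLabel p (x + x) = 1 := by
  have hmod : x.val % (2 * p) = 1 ∨ x.val % (2 * p) = p + 1 := by
    rcases hx with h | h | h | h <;> rw [h]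
    · exact Or.inl (Nat.mod_eq_of_lt (by omega))
    · exact Or.inr (Nat.mod_eq_of_lt (by omega))
    · exact Or.inl (by rw [Nat.add_mod_left, Nat.mod_eq_of_lt (by omega)])
    · exact Or.inr (by rw [show 3 * p + 1 = 2 * p + (p + 1) by ring, Nat.add_mod_left,
        Nat.mod_eq_of_lt (by omega)])
  rw [fourMulLabel, parityLabel_add_self (m := 2 * p) (by omega), signOn]
  rcases hmod with h | h <;> simp [h]

theorem fourMulLabel_sum_of_mem_pathPairs (hn : n = 4 * p) (hp : 3 ≤ p) {v : Vertex n}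
    (hv : v ∈ pathPairs p) : fourMulLabel p (∑ z ∈ v.1, z) = 1 := by
  simp only [pathPairs, mem_subtype, mem_insert, mem_singleton] at hv
  rcases hv with h | h | h <;> rw [h, sum_pair (mt (ofNat_inj (by omega) (by omega)).1 (by omega)),
    fourMulLabel]
  · rw [parityLabel_of_val (k := 2 * p + 2)
      (by rw [val_ofNat_add_ofNat, Nat.mod_eq_of_lt] <;> omega)]
    simp [signOn]
  · rw [parityLabel_of_val (k := 2) (by
      rw [val_ofNat_add_ofNat, show p + 1 + (3 * p + 1) = n + 2 by omega, Nat.add_mod_left,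
        Nat.mod_eq_of_lt (by omega)])]
    simp [signOn]
  · rw [parityLabel_of_val (k := p + 2) (by rw [val_ofNat_add_ofNat, Nat.mod_eq_of_lt] <;> omega)]
    unfold oddLabel signOn
    split_ifs <;> simp_all <;> omega

theorem card_filter_pathPairs_le (hn : n = 4 * p) (hp : 3 ≤ p) (x : Fin n) :
    (#{v ∈ pathPairs p | x ∈ v.1} : ℤ) ≤ 1 + fourMulLabel p (x + x) := by
  by_cases hx : ∃ v ∈ pathPairs p, x ∈ v.1
  · obtain ⟨v, hv, hxv⟩ := hx
    obtain ⟨s, hs, t, ht, hst⟩ := exists_disjoint_mem_pathPairs hn hp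
    have hlt := card_filter_mem_lt hs ht hst x
    rw [card_pathPairs hn hp] at hlt
    rw [fourMulLabel_add_self hn hp (val_eq_of_mem_pathPairs hn hp hv hxv)]
    omega
  · rw [filter_false_of_mem fun v hv hxv => hx ⟨v, hv, hxv⟩, card_empty, Nat.cast_zero]
    have := parityLabel_of_forall (P := fun a => a = -1 ∨ a = 1 ∨ a = 2) (oddLabel_eq_or p)
      (signOn_eq_or ({1, p + 1} ∪ Ico 3 p)) (x + x)
    rw [fourMulLabel]
    omega

theorem signedRomanDomNum_le_five_of_eq_four_mul (hn : n = 4 * p) (hp : 3 ≤ p) :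
    signedRomanDomNum (kneserGraph n 2) ≤ 5 := by
  have hm : n = 2 * (2 * p) := by omega
  have hS : {1, p + 1} ∪ Ico 3 p ⊆ range (2 * p) := fun i => by
    simp only [mem_union, mem_insert, mem_singleton, mem_Ico, mem_range]
    omega
  have hcardS : #({1, p + 1} ∪ Ico 3 p) = p - 1 := by
    rw [card_union_of_disjoint (by simp), card_pair (by omega), Nat.card_Ico]
    omega
  refine signedRomanDomNum_le_five_of_sumLabel ⟨2 * p, by omega⟩ (by omega) (fourMulLabel p)
    (pathPairs p) (parityLabel_of_forall (P := fun a => a = -1 ∨ a = 1 ∨ a = 2) (oddLabel_eq_or _)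
      (signOn_eq_or _)) (fun v hv => fourMulLabel_sum_of_mem_pathPairs hn hp hv)
    (by simp [fourMulLabel, parityLabel_one (n := n) (by omega), oddLabel]) ?_
    (card_filter_pathPairs_le hn hp) ?_
  · rw [fourMulLabel, sum_parityLabel hm, sum_range_oddLabel (by omega) (by omega),
      sum_range_signOn hS, hcardS]
    omega
  · rw [card_pathPairs hn hp, fourMulLabel, sum_parityLabel_add_self hm, sum_range_signOn hS,
      hcardS]
    omega

end NeZero

end KneserTwo

theorem kneser2_signedRomanDomNum_upper_even (n : ℕ) (hn : 12 ≤ n) (heven : Even n) :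
    signedRomanDomNum (kneserGraph n 2) ≤ 5 := by
  have : NeZero n := ⟨by omega⟩
  obtain ⟨m, hm⟩ := heven
  rcases Nat.even_or_odd m with ⟨p, rfl⟩ | ⟨q, rfl⟩
  · exact KneserTwo.signedRomanDomNum_le_five_of_eq_four_mul (p := p) (by omega) (by omega)
  · exact KneserTwo.signedRomanDomNum_le_five_of_eq_four_mul_add_two (q := q) (by omega) (by omega)
end

section
/- The Roman domination number of the Kneser graph K_{11,3} equals 10, i.e. γ_R(K_{11,3}) = 10. -/
/-!
The function that is 2 on the five triples {9,10,0}, {9,10,1}, {0,1,2}, {3,4,5}, {6,7,8} and 0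
elsewhere is a Roman dominating function of weight 10.

Conversely, let `D` be the set of vertices of weight 2 and `U` the set of triples meeting every
member of `D`. Vertices of `U` have no neighbour of weight 2, so the total weight is at least
`|D| + |D ∪ U|`. This is at least 10 when `|D| ≥ 5`, and when `D` is empty `U` contains all 165
triples. When `1 ≤ |D| ≤ 4`, double counting gives a point `x` lying in all but at most two members
of `D` (four triples of an 11-set cannot be pairwise disjoint). Then either two points `x, w` meet
every member of `D`, and the 9 triples `{x, w, z}` lie in `U`, or the two members `A, B` avoiding
`x` are disjoint, and the 9 triples `{x, a, b}` with `a ∈ A`, `b ∈ B` lie in `U`.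
-/

open Finset

section HittingTriples

variable {α : Type*} [Fintype α] [DecidableEq α]

def hittingTriples (𝒟 : Finset (Finset α)) : Finset (Finset α) :=
  {s ∈ powersetCard 3 univ | ∀ t ∈ 𝒟, ¬Disjoint s t}

lemma card_mul_card_mul_card_le_card_hittingTriples {S₁ S₂ S₃ : Finset α}
    (h₁₂ : Disjoint S₁ S₂) (h₁₃ : Disjoint S₁ S₃) (h₂₃ : Disjoint S₂ S₃)
    {𝒟 : Finset (Finset α)} (h𝒟 : ∀ t ∈ 𝒟, S₁ ⊆ t ∨ S₂ ⊆ t ∨ S₃ ⊆ t) :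
    #S₁ * #S₂ * #S₃ ≤ #(hittingTriples 𝒟) := by
  rw [← card_product, ← card_product]
  refine card_le_card_of_injOn (fun p => {p.1.1, p.1.2, p.2}) ?_ ?_
  · rintro ⟨⟨a, b⟩, c⟩ hp
    simp only [coe_product, Set.mem_prod, mem_coe] at hp
    obtain ⟨⟨ha, hb⟩, hc⟩ := hp
    simp only [hittingTriples, coe_filter, mem_powersetCard, subset_univ, true_and,
      Set.mem_ofPred_eq]
    have hab : a ≠ b := fun h => disjoint_left.mp h₁₂ ha (h ▸ hb)
    have hac : a ≠ c := fun h => disjoint_left.mp h₁₃ ha (h ▸ hc)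
    have hbc : b ≠ c := fun h => disjoint_left.mp h₂₃ hb (h ▸ hc)
    refine ⟨card_eq_three.mpr ⟨a, b, c, hab, hac, hbc, rfl⟩, fun t ht => ?_⟩
    rw [not_disjoint_iff]
    rcases h𝒟 t ht with h | h | h
    · exact ⟨a, by simp, h ha⟩
    · exact ⟨b, by simp, h hb⟩
    · exact ⟨c, by simp, h hc⟩
  · rintro ⟨⟨a, b⟩, c⟩ hp ⟨⟨a', b'⟩, c'⟩ hp' heq
    simp only [coe_product, Set.mem_prod, mem_coe] at hp hp'
    have hmem : a ∈ ({a', b', c'} : Finset α) ∧ b ∈ ({a', b', c'} : Finset α) ∧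
        c ∈ ({a', b', c'} : Finset α) := by
      simp only [← heq]; simp
    simp only [mem_insert, mem_singleton] at hmem
    obtain ⟨⟨ha, hb⟩, hc⟩ := hp
    obtain ⟨⟨ha', hb'⟩, hc'⟩ := hp'
    grind [disjoint_left]

lemma card_sub_two_le_card_hittingTriples {x w : α} (hxw : x ≠ w) {𝒟 : Finset (Finset α)}
    (h𝒟 : ∀ t ∈ 𝒟, x ∈ t ∨ w ∈ t) : Fintype.card α - 2 ≤ #(hittingTriples 𝒟) := by
  have key := card_mul_card_mul_card_le_card_hittingTriples (S₁ := {x}) (S₂ := {w})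
    (S₃ := univ \ {x, w}) (by simpa using hxw) (by simp) (by simp) (fun t ht => by
      rcases h𝒟 t ht with h | h <;> simp [h])
  simpa [card_sdiff, hxw] using key

lemma nine_le_card_hittingTriples_of_forall_mem_or_eq_or_eq (hα : 11 ≤ Fintype.card α)
    {x : α} {A B : Finset α} (hA : #A = 3) (hB : #B = 3) (hxA : x ∉ A) (hxB : x ∉ B)
    {𝒟 : Finset (Finset α)} (h𝒟 : ∀ t ∈ 𝒟, x ∈ t ∨ t = A ∨ t = B) :
    9 ≤ #(hittingTriples 𝒟) := by
  by_cases hAB : Disjoint A B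
  · have key := card_mul_card_mul_card_le_card_hittingTriples (S₃ := {x}) hAB
      (disjoint_singleton_right.mpr hxA) (disjoint_singleton_right.mpr hxB) (𝒟 := 𝒟)
      (fun t ht => by rcases h𝒟 t ht with h | rfl | rfl <;> simp [*])
    simpa [hA, hB] using key
  · obtain ⟨y, hyA, hyB⟩ := not_disjoint_iff.mp hAB
    have key := card_sub_two_le_card_hittingTriples (fun h : x = y => hxA (h ▸ hyA)) (𝒟 := 𝒟)
      (fun t ht => by rcases h𝒟 t ht with h | rfl | rfl <;> simp [*])
    omega

lemma nine_le_card_hittingTriples_of_card_filter_notMem_le_two (hα : 11 ≤ Fintype.card α)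
    {𝒟 : Finset (Finset α)} (h𝒟 : ∀ t ∈ 𝒟, #t = 3) {x : α} (hx : #{t ∈ 𝒟 | x ∉ t} ≤ 2) :
    9 ≤ #(hittingTriples 𝒟) := by
  set R := {t ∈ 𝒟 | x ∉ t}
  have hcover : ∀ t ∈ 𝒟, x ∈ t ∨ t ∈ R := fun t ht => by
    by_cases hxt : x ∈ t
    · exact Or.inl hxt
    · exact Or.inr (mem_filter.mpr ⟨ht, hxt⟩)
  have hRD : ∀ t ∈ R, t ∈ 𝒟 ∧ x ∉ t := fun t ht => mem_filter.mp ht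
  interval_cases hcard : #R
  · have : Nontrivial α := Fintype.one_lt_card_iff_nontrivial.mp (by omega)
    obtain ⟨w, hw⟩ := exists_ne x
    have key := card_sub_two_le_card_hittingTriples hw.symm (𝒟 := 𝒟) fun t ht =>
      Or.inl ((hcover t ht).resolve_right (by simp [card_eq_zero.mp hcard]))
    omega
  · obtain ⟨A, hA⟩ := card_eq_one.mp hcard
    have hAR := hRD A (by simp [hA])
    exact nine_le_card_hittingTriples_of_forall_mem_or_eq_or_eq hα (h𝒟 A hAR.1) (h𝒟 A hAR.1)
      hAR.2 hAR.2 fun t ht => by simpa [hA] using hcover t ht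
  · obtain ⟨A, B, -, hAB⟩ := card_eq_two.mp hcard
    have hAR := hRD A (by simp [hAB])
    have hBR := hRD B (by simp [hAB])
    exact nine_le_card_hittingTriples_of_forall_mem_or_eq_or_eq hα (h𝒟 A hAR.1) (h𝒟 B hBR.1)
      hAR.2 hBR.2 fun t ht => by simpa [hAB] using hcover t ht

lemma exists_card_filter_notMem_le_two [Nonempty α] (hα : Fintype.card α ≤ 11)
    {𝒟 : Finset (Finset α)} (h𝒟 : ∀ t ∈ 𝒟, #t = 3) (h4 : #𝒟 ≤ 4) :
    ∃ x, #{t ∈ 𝒟 | x ∉ t} ≤ 2 := by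
  by_contra! h
  have hle : ∀ x, #{t ∈ 𝒟 | x ∈ t} ≤ #𝒟 - 3 := fun x => by
    have := card_filter_add_card_filter_not (s := 𝒟) (p := fun t => x ∈ t)
    have := h x
    omega
  have h3 : 3 ≤ #𝒟 := (h (Classical.arbitrary α)).trans_le (card_filter_le _ _)
  -- double counting: `3 * #𝒟 = ∑ t ∈ 𝒟, #t ≤ 11 * (#𝒟 - 3)`, impossible for `#𝒟 ∈ {3, 4}`
  have hsum := sum_card_le hle
  rw [sum_congr rfl h𝒟, sum_const, smul_eq_mul] at hsum
  interval_cases #𝒟 <;> omega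

lemma nine_le_card_hittingTriples (hα : Fintype.card α = 11) {𝒟 : Finset (Finset α)}
    (h𝒟 : ∀ t ∈ 𝒟, #t = 3) (h4 : #𝒟 ≤ 4) : 9 ≤ #(hittingTriples 𝒟) :=
  have : Nonempty α := Fintype.card_pos_iff.mp (by omega)
  have ⟨_, hx⟩ := exists_card_filter_notMem_le_two hα.le h𝒟 h4
  nine_le_card_hittingTriples_of_card_filter_notMem_le_two hα.ge h𝒟 hx

end HittingTriples

section RomanDomination

variable {V : Type*} {G : SimpleGraph V}

lemma IsDominatingSet.isRDF [DecidableEq V] {S : Finset V} (hS : IsDominatingSet G S) :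
    IsRDF G (fun v => if v ∈ S then 2 else 0) := by
  refine ⟨fun v => by dsimp only; split_ifs <;> norm_num, fun v hv => ?_⟩
  have hvS : v ∉ S := fun h => by simp [h] at hv
  obtain ⟨u, huS, hvu⟩ := hS v hvS
  exact ⟨u, hvu, if_pos huS⟩

variable [Fintype V]

lemma romanDomNum_le {f : V → ℕ} (hf : IsRDF G f) : romanDomNum G ≤ ∑ v, f v :=
  Nat.sInf_le ⟨f, hf, rfl⟩

lemma le_romanDomNum {m : ℕ} (h : ∀ f, IsRDF G f → m ≤ ∑ v, f v) : m ≤ romanDomNum G := by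
  have hone : IsRDF G (fun _ => 1) := ⟨fun _ => by norm_num, fun _ h => absurd h one_ne_zero⟩
  refine le_csInf ⟨_, _, hone, rfl⟩ ?_
  rintro _ ⟨f, hf, rfl⟩
  exact h f hf

lemma romanDomNum_le_two_mul_card [DecidableEq V] {S : Finset V} (hS : IsDominatingSet G S) :
    romanDomNum G ≤ 2 * #S :=
  (romanDomNum_le hS.isRDF).trans_eq (by simp [sum_ite_mem, mul_comm])

lemma IsRDF.card_add_card_union_le_sum [DecidableEq V] {f : V → ℕ} (hf : IsRDF G f)
    {U : Finset V} (hU : ∀ v ∈ U, ∀ u, G.Adj v u → f u ≠ 2) :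
    #({v | f v = 2} : Finset V) + #(U ∪ ({v | f v = 2} : Finset V)) ≤ ∑ v, f v := by
  set D : Finset V := {v | f v = 2} with hD
  calc #D + #(U ∪ D)
      = ∑ v, ((if v ∈ D then 1 else 0) + if v ∈ U ∪ D then 1 else 0) := by
        simp only [sum_add_distrib, sum_ite_mem, univ_inter, card_eq_sum_ones]
    _ ≤ ∑ v, f v := sum_le_sum fun v _ => by
        by_cases h0 : f v = 0
        · obtain ⟨u, hvu, hu⟩ := hf.2 v h0
          have hvU : v ∉ U := fun hv => hU v hv u hvu hu
          simp [hD, hvU, h0]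
        · have := hf.1 v
          split_ifs <;> grind

end RomanDomination

lemma card_filter_subtype_val {α : Type*} [Fintype α] [DecidableEq α] {k : ℕ}
    (P : Finset α → Prop) [DecidablePred P] :
    #{v : {s : Finset α // #s = k} | P v.1} = #{s ∈ powersetCard k univ | P s} := by
  rw [← card_map (Function.Embedding.subtype _)]
  congr 1
  ext s
  simp [mem_powersetCard, and_comm]

section KneserGraph

local notation "Triple" => {s : Finset (Fin 11) // #s = 3}

lemma ten_le_sum_of_isRDF_kneserGraph {f : Triple → ℕ}
    (hf : IsRDF (kneserGraph 11 3) f) : 10 ≤ ∑ v, f v := by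
  set D : Finset Triple := {v | f v = 2} with hD
  set 𝒟 := D.map (Function.Embedding.subtype _)
  set U : Finset Triple := {v | ∀ t ∈ 𝒟, ¬Disjoint v.1 t}
  have hU : ∀ v ∈ U, ∀ u, (kneserGraph 11 3).Adj v u → f u ≠ 2 := fun v hv u hvu hu =>
    (mem_filter.mp hv).2 u.1 (mem_map_of_mem _ (by simp [hD, hu])) hvu.2
  have hsum := hf.card_add_card_union_le_sum hU
  rw [← hD] at hsum
  have hUcard : #U = #(hittingTriples 𝒟) :=
    card_filter_subtype_val (fun s => ∀ t ∈ 𝒟, ¬Disjoint s t)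
  have hU_le := card_le_card (subset_union_left (s₁ := U) (s₂ := D))
  have hD_le := card_le_card (subset_union_right (s₁ := U) (s₂ := D))
  rcases D.eq_empty_or_nonempty with hempty | hne
  · have : #(hittingTriples 𝒟) = 165 := by simp [𝒟, hempty, hittingTriples, Nat.choose]
    omega
  · by_cases h4 : #D ≤ 4
    · have := nine_le_card_hittingTriples (by simp) (𝒟 := 𝒟)
        (fun t ht => by obtain ⟨v, -, rfl⟩ := mem_map.mp ht; exact v.2) (by simpa [𝒟])
      have := hne.card_pos
      omega
    · omega

def kneserDominatingTriples : Finset (Finset (Fin 11)) :=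
  {{9, 10, 0}, {9, 10, 1}, {0, 1, 2}, {3, 4, 5}, {6, 7, 8}}

lemma card_of_mem_kneserDominatingTriples {t : Finset (Fin 11)}
    (ht : t ∈ kneserDominatingTriples) : #t = 3 := by
  fin_cases ht <;> rfl

/- A triple either misses one of the blocks {0,1,2}, {3,4,5}, {6,7,8}, or takes one point from
each and then misses 9, 10 and one of 0, 1. -/
lemma exists_mem_kneserDominatingTriples_notMem :
    ∀ a b c : Fin 11, ∃ t ∈ kneserDominatingTriples, a ∉ t ∧ b ∉ t ∧ c ∉ t := by
  decide

def kneserDominatingSet : Finset Triple :=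
  {v | v.1 ∈ kneserDominatingTriples}

lemma card_kneserDominatingSet : #kneserDominatingSet = 5 := by
  rw [kneserDominatingSet, card_filter_subtype_val (· ∈ kneserDominatingTriples),
    filter_mem_eq_inter, inter_eq_right.mpr fun t ht =>
      mem_powersetCard.mpr ⟨subset_univ t, card_of_mem_kneserDominatingTriples ht⟩]
  rfl

lemma isDominatingSet_kneserDominatingSet :
    IsDominatingSet (kneserGraph 11 3) kneserDominatingSet := by
  intro v hv
  obtain ⟨a, b, c, -, -, -, hv3⟩ := card_eq_three.mp v.2
  obtain ⟨t, ht, ha, hb, hc⟩ := exists_mem_kneserDominatingTriples_notMem a b c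
  have hu : (⟨t, card_of_mem_kneserDominatingTriples ht⟩ : Triple) ∈ kneserDominatingSet := by
    simp [kneserDominatingSet, ht]
  refine ⟨_, hu, fun h => hv (h ▸ hu), ?_⟩
  simp [hv3, ha, hb, hc]

end KneserGraph

theorem kneser113_romanDomNum : romanDomNum (kneserGraph 11 3) = 10 :=
  le_antisymm
    ((romanDomNum_le_two_mul_card isDominatingSet_kneserDominatingSet).trans_eq
      (by rw [card_kneserDominatingSet]))
    (le_romanDomNum fun _ => ten_le_sum_of_isRDF_kneserGraph)
end

section
/- For all integers n and k with k ≥ 2 and n ≥ k(k+1), the domination number of the Kneser graph K_{n,k} equals k+1, i.e. γ(K_{n,k}) = k+1. -/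
/-!
Any `k + 1` pairwise disjoint `k`-sets dominate `K(n, k)`: a `k`-set cannot meet all of them.
Conversely, `k` vertices never dominate. Their union misses some point `z` when `n > k²`, and a
`k`-set through `z` that meets every one of them is a vertex outside the family adjacent to none
of them. Such a set exists as soon as the family has a hitting set of size `< k`; otherwise picking
one point in each member yields a hitting set of size exactly `k`, which either lies outside the
family or, dropping the point picked in itself, leaves a hitting set of size `< k`.
-/

open Finset Function

def IsHittingSet {α : Type*} (S : Finset (Finset α)) (X : Finset α) : Prop :=
  ∀ s ∈ S, ¬Disjoint X s

section HittingSet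

variable {α : Type*} [DecidableEq α] {S : Finset (Finset α)} {k : ℕ}

lemma isHittingSet_image {f : Finset α → α} (hf : ∀ s ∈ S, f s ∈ s) :
    IsHittingSet S (S.image f) :=
  fun s hs => not_disjoint_iff.2 ⟨f s, mem_image_of_mem f hs, hf s hs⟩

variable [Fintype α]

lemma exists_card_eq_isHittingSet_notMem_of_card_lt {H : Finset α} (hH : IsHittingSet S H)
    (hHk : H.card < k) (hk : k ≤ Fintype.card α) {z : α} (hz : ∀ s ∈ S, z ∉ s) :
    ∃ T : Finset α, T.card = k ∧ IsHittingSet S T ∧ T ∉ S := by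
  obtain ⟨T, hzHT, -, hT⟩ := exists_subsuperset_card_eq (subset_univ (insert z H))
    ((card_insert_le z H).trans hHk) (by rwa [card_univ])
  refine ⟨T, hT, fun s hs hdis => hH s hs (hdis.mono_left ((subset_insert z H).trans hzHT)), ?_⟩
  exact fun hTS => hz T hTS (hzHT (mem_insert_self z H))

lemma exists_card_eq_isHittingSet_notMem (hk : 2 ≤ k) (hSk : S.card ≤ k)
    (hS : ∀ s ∈ S, s.card = k) (hα : k * k < Fintype.card α) :
    ∃ T : Finset α, T.card = k ∧ IsHittingSet S T ∧ T ∉ S := by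
  obtain ⟨z, -, hz⟩ := exists_mem_notMem_of_card_lt_card (t := univ)
    ((card_biUnion_le_card_mul S id k fun s hs => (hS s hs).le).trans_lt
      ((Nat.mul_le_mul_right k hSk).trans_lt (by rwa [card_univ])))
  replace hz : ∀ s ∈ S, z ∉ s := fun s hs hzs => hz (mem_biUnion.2 ⟨s, hs, hzs⟩)
  have hSne : ∀ s ∈ S, s.Nonempty := fun s hs => card_pos.1 (by rw [hS s hs]; omega)
  have : Nonempty α := ⟨z⟩
  choose! f hf using hSne
  have of_card_lt := fun {H : Finset α} (hH : IsHittingSet S H) (hHk : H.card < k) =>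
    exists_card_eq_isHittingSet_notMem_of_card_lt hH hHk (by nlinarith) hz
  set X := S.image f
  have hXS : X.card ≤ S.card := card_image_le
  by_cases hXk : X.card < k
  · exact of_card_lt (isHittingSet_image hf) hXk
  by_cases hX : X ∈ S
  swap
  · exact ⟨X, by omega, isHittingSet_image hf, hX⟩
  -- `X` is hit by the points picked in the other members, all of which lie in `X`.
  set H := (S.erase X).image f
  have hH : IsHittingSet (S.erase X) H := isHittingSet_image fun s hs => hf s (mem_of_mem_erase hs)
  have hHX : H ⊆ X := image_subset_image (erase_subset X S)
  have hHcard : H.card < k := card_image_le.trans_lt (by rw [card_erase_of_mem hX]; omega)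
  have hHne : H.Nonempty := by
    rw [image_nonempty, ← card_pos, card_erase_of_mem hX]
    have := hS X hX
    omega
  refine of_card_lt (fun s hs => ?_) hHcard
  by_cases hsX : s = X
  · obtain ⟨y, hy⟩ := hHne
    exact hsX ▸ not_disjoint_iff.2 ⟨y, hy, hHX hy⟩
  · exact hH s (mem_erase.2 ⟨hsX, hs⟩)

end HittingSet

lemma exists_pairwise_disjoint_card_eq {α : Type*} [Fintype α] {m k : ℕ}
    (h : m * k ≤ Fintype.card α) :
    ∃ D : Fin m → Finset α, (∀ i, (D i).card = k) ∧ Pairwise (Disjoint on D) := by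
  obtain ⟨e⟩ := Embedding.nonempty_of_card_le (α := Fin m × Fin k) (β := α)
    (by simpa using h)
  refine ⟨fun i => univ.map ⟨fun j => e (i, j), fun j j' hj => (Prod.ext_iff.1 (e.injective hj)).2⟩,
    fun i => by simp, fun i i' hii' => disjoint_left.2 ?_⟩
  simp only [mem_map, mem_univ, true_and, not_exists]
  rintro _ ⟨j, rfl⟩ j' hj
  exact hii' (Prod.ext_iff.1 (e.injective hj)).1.symm

lemma exists_disjoint_of_card_lt {ι α : Type*} [Fintype ι] {D : ι → Finset α}
    (hD : Pairwise (Disjoint on D)) {v : Finset α} (hv : v.card < Fintype.card ι) :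
    ∃ i, Disjoint v (D i) := by
  by_contra! hmeet
  choose g hg using fun i => not_disjoint_iff.1 (hmeet i)
  have hg_inj : Injective g := fun i j hij => by
    by_contra hne
    exact disjoint_left.1 (hD hne) (hg i).2 (hij ▸ (hg j).2)
  have := card_le_card_of_injOn g (s := univ) (fun i _ => (hg i).1) hg_inj.injOn
  rw [card_univ] at this
  omega

lemma kneserGraph_exists_isDominatingSet_card_eq {n k : ℕ} (hk : 0 < k) (hn : k * (k + 1) ≤ n) :
    ∃ S : Finset {s : Finset (Fin n) // s.card = k},
      IsDominatingSet (kneserGraph n k) S ∧ S.card = k + 1 := by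
  obtain ⟨D, hD, hDdisj⟩ := exists_pairwise_disjoint_card_eq (α := Fin n) (m := k + 1) (k := k)
    (by rw [Fintype.card_fin]; linarith)
  let vertex : Fin (k + 1) → {s : Finset (Fin n) // s.card = k} := fun i => ⟨D i, hD i⟩
  have vertex_inj : Injective vertex := injective_iff_pairwise_ne.2 fun i j hij hv =>
    (hDdisj hij).ne (card_pos.1 (by rw [hD i]; exact hk)).ne_empty (congrArg Subtype.val hv)
  refine ⟨univ.image vertex, fun v hv => ?_, by rw [card_image_of_injective _ vertex_inj]; simp⟩
  obtain ⟨i, hi⟩ := exists_disjoint_of_card_lt hDdisj (v := v.1) (by simp [v.2])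
  have hvi : vertex i ∈ univ.image vertex := mem_image_of_mem vertex (mem_univ i)
  exact ⟨vertex i, hvi, fun h => hv (h ▸ hvi), hi⟩

lemma kneserGraph_lt_card_of_isDominatingSet {n k : ℕ} (hk : 2 ≤ k) (hn : k * k < n)
    {S : Finset {s : Finset (Fin n) // s.card = k}} (hS : IsDominatingSet (kneserGraph n k) S) :
    k < S.card := by
  by_contra! hSk
  obtain ⟨T, hT, hThit, hT_notMem⟩ := exists_card_eq_isHittingSet_notMem
    (S := S.map (Embedding.subtype _)) hk (by simpa using hSk)
    (by simp +contextual) (by simpa using hn)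
  obtain ⟨u, hu, hadj⟩ := hS ⟨T, hT⟩ fun h => hT_notMem (mem_map_of_mem _ h)
  exact hThit u (mem_map_of_mem _ hu) hadj.2

lemma domNum_eq {V : Type*} [Fintype V] {G : SimpleGraph V} {m : ℕ}
    (h : ∃ S, IsDominatingSet G S ∧ S.card = m) (h' : ∀ S, IsDominatingSet G S → m ≤ S.card) :
    domNum G = m :=
  IsLeast.csInf_eq ⟨h, by rintro _ ⟨S, hS, rfl⟩; exact h' S hS⟩

theorem kneser_domNum (n k : ℕ) (hk : 2 ≤ k) (hn : k * (k + 1) ≤ n) :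
    domNum (kneserGraph n k) = k + 1 := by
  refine domNum_eq (kneserGraph_exists_isDominatingSet_card_eq (by omega) hn) fun S hS => ?_
  exact kneserGraph_lt_card_of_isDominatingSet hk (by nlinarith) hS
end

section
/- Let k > 1 and n ≥ k(k+1), and let f be a Roman dominating function on the Kneser graph K_{n,k} with level sets V_i = {v : f(v) = i} for i = 0,1,2. If 1 ≤ |V_2| ≤ k−1, then |V_1| ≥ 2k. -/
/-!
Pick one element from each set in `V₂` and extend these at most `k - 1` points to a set `B`
of exactly `k - 1` points. For each of the `n - (k - 1)` points `x ∉ B`, the vertex `B ∪ {x}`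
meets every set in `V₂`, so it has no neighbour of weight `2` and must have positive weight.
These vertices are distinct, hence `|V₁| + |V₂| ≥ n - (k - 1)`, and `|V₂| ≤ k - 1` leaves
`|V₁| ≥ n - 2(k - 1) ≥ k² - k + 2 ≥ 2k`.
-/

open Finset

theorem IsRDF.pos_of_forall_adj_ne_two {V : Type*} {G : SimpleGraph V} {f : V → ℕ}
    (hf : IsRDF G f) {v : V} (hv : ∀ u, G.Adj v u → f u ≠ 2) : 0 < f v := by
  by_contra! h0
  obtain ⟨u, hadj, hu⟩ := hf.2 v (by omega)
  exact hv u hadj hu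

theorem IsRDF.card_filter_pos_le {V : Type*} [Fintype V] {G : SimpleGraph V} {f : V → ℕ}
    (hf : IsRDF G f) :
    #{v | 0 < f v} ≤ #{v | f v = 1} + #{v | f v = 2} := by
  classical
  refine (card_le_card fun v hv => ?_).trans (card_union_le _ _)
  have := hf.1 v
  simp only [mem_filter, mem_univ, true_and, mem_union] at hv ⊢
  omega

theorem Finset.exists_card_eq_forall_not_disjoint {ι α : Type*} [Fintype α] [DecidableEq α]
    (s : Finset ι) (A : ι → Finset α) (hA : ∀ i, (A i).Nonempty) {m : ℕ}
    (hsm : #s ≤ m) (hm : m ≤ Fintype.card α) :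
    ∃ B : Finset α, #B = m ∧ ∀ i ∈ s, ¬Disjoint B (A i) := by
  choose a ha using hA
  obtain ⟨B, hSB, hB⟩ := exists_superset_card_eq (s := s.image a) (card_image_le.trans hsm) hm
  exact ⟨B, hB, fun i hi => not_disjoint_iff.2 ⟨a i, hSB (mem_image_of_mem a hi), ha i⟩⟩

theorem kneserGraph.pos_of_forall_not_disjoint {n k : ℕ}
    {f : {s : Finset (Fin n) // s.card = k} → ℕ} (hf : IsRDF (kneserGraph n k) f)
    {v : {s : Finset (Fin n) // s.card = k}} (hv : ∀ u, f u = 2 → ¬Disjoint v.1 u.1) :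
    0 < f v :=
  hf.pos_of_forall_adj_ne_two fun u hadj hu => hv u hu hadj.2

theorem kneserGraph.card_compl_le_card_filter_insert {n k : ℕ}
    (P : {s : Finset (Fin n) // s.card = k} → Prop) [DecidablePred P] (B : Finset (Fin n))
    (hB : #B + 1 = k) (hP : ∀ x ∉ B, ∀ h : #(insert x B) = k, P ⟨insert x B, h⟩) :
    #(univ \ B) ≤ #{v | P v} := by
  rw [← card_map (Function.Embedding.subtype _)]
  refine card_le_card_of_injOn (fun x => insert x B) (fun x hx => ?_) (fun x hx y _ hxy => ?_)
  · have hxB : x ∉ B := (mem_sdiff.1 hx).2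
    have hcard : #(insert x B) = k := by rw [card_insert_of_notMem hxB, hB]
    exact mem_map.2 ⟨⟨insert x B, hcard⟩, by simpa using hP x hxB hcard, rfl⟩
  · exact (insert_inj (mem_sdiff.1 (mem_coe.1 hx)).2).1 hxy

theorem rdf_V1_large_of_V2_small_general (n k : ℕ) (hn : k * (k + 1) ≤ n)
    (f : {s : Finset (Fin n) // s.card = k} → ℕ) (hf : IsRDF (kneserGraph n k) f)
    (h2 : (Finset.univ.filter (fun v => f v = 2)).card ≤ k - 1) :
    2 * k ≤ (Finset.univ.filter (fun v => f v = 1)).card := by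
  rcases Nat.eq_zero_or_pos k with rfl | hk
  · simp
  have hkn : k ≤ n := (Nat.le_mul_of_pos_right k (by omega)).trans hn
  obtain ⟨B, hBcard, hB⟩ := exists_card_eq_forall_not_disjoint {v | f v = 2} Subtype.val
    (fun v => card_pos.1 (by rw [v.2]; exact hk)) h2 (by rw [Fintype.card_fin]; omega)
  have hpos : ∀ x ∉ B, ∀ h : #(insert x B) = k, 0 < f ⟨insert x B, h⟩ :=
    fun x _ _ => kneserGraph.pos_of_forall_not_disjoint hf fun u hu hdisj =>
      hB u (by simpa using hu) (disjoint_insert_left.1 hdisj).2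
  have hstar : n - (k - 1) ≤ #{v | 0 < f v} := by
    have := kneserGraph.card_compl_le_card_filter_insert (fun v => 0 < f v) B (by omega) hpos
    rwa [card_sdiff_of_subset (subset_univ B), card_univ, Fintype.card_fin, hBcard] at this
  have := hf.card_filter_pos_le
  have : 4 * k ≤ k * (k + 1) + 2 := by rcases le_or_gt k 1 with h | h <;> nlinarith
  omega

theorem rdf_V1_large_of_V2_small (n k : ℕ) (hk : 1 < k) (hn : k * (k + 1) ≤ n)
    (f : {s : Finset (Fin n) // s.card = k} → ℕ) (hf : IsRDF (kneserGraph n k) f)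
    (h1 : 1 ≤ (Finset.univ.filter (fun v => f v = 2)).card)
    (h2 : (Finset.univ.filter (fun v => f v = 2)).card ≤ k - 1) :
    2 * k ≤ (Finset.univ.filter (fun v => f v = 1)).card :=
  rdf_V1_large_of_V2_small_general n k hn f hf h2
end
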